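/- arXiv:1203.4673 — 4 statements merged into one kernel-verified Lean document; each statement's English description precedes it below -/
import Mathlib

section
/- Y_∞ := sup_n Y_n is finite almost surely, and moreover E Y_∞ ≤ C(1 + E φ_1)/(1 − Ĉ). -/
/-!
Bound `Y_∞` by the series `T = ∑_{i ≥ 1} θ_i (φ_i + 1)` of non-negative terms. Each term is a
product of functions of the distinct variables `η_1, …, η_i, φ_i`, so by independence
`E[θ_i (φ_i + 1)] = E η_i · ∏_{j<i} E η̂_j · E(φ_i + 1) = C Ĉ^{i-1} (1 + E φ_1)`,
so `E T = C (1 + E φ_1) / (1 - Ĉ) < ∞`. Hence `T`, and with it `Y_∞ ≤ T`, is finite almost surely.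
-/

open MeasureTheory ProbabilityTheory Filter
open scoped ENNReal

/-- `θ_n = η_n ∏_{i=1}^{n-1} min(η_i, 1)`. -/
noncomputable def thetaSeq {Ω : Type*} (η : ℕ → Ω → ℝ) (n : ℕ) (ω : Ω) : ℝ :=
  η n ω * ∏ i ∈ Finset.Ico 1 n, min (η i ω) 1

/-- `Y_n = max_{1 ≤ i ≤ n} θ_i (φ_i + 1)`. -/
noncomputable def Yseq {Ω : Type*} (η φ : ℕ → Ω → ℝ) (n : ℕ) (ω : Ω) : ℝ :=
  sSup {r : ℝ | ∃ i, 1 ≤ i ∧ i ≤ n ∧ r = thetaSeq η i ω * (φ i ω + 1)}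

namespace ProbabilityTheory

variable {Ω : Type*} [MeasurableSpace Ω] {P : Measure Ω}

lemma iIndepFun.lintegral_prod_comp {ι β : Type*} [MeasurableSpace β] {X : ι → Ω → β}
    (hX : iIndepFun X P) (hXm : ∀ k, Measurable (X k)) {g : ι → β → ℝ≥0∞}
    (hg : ∀ k, Measurable (g k)) (s : Finset ι) :
    ∫⁻ ω, ∏ k ∈ s, g k (X k ω) ∂P = ∏ k ∈ s, ∫⁻ ω, g k (X k ω) ∂P :=
  lintegral_prod_eq_prod_lintegral_of_indepFun s (fun k => g k ∘ X k) (hX.comp g hg)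
    fun k => (hg k).comp (hXm k)

lemma lintegral_comp_eq_of_map_eq {β : Type*} [MeasurableSpace β] {X Y : Ω → β}
    (hX : Measurable X) (hY : Measurable Y) (h : P.map X = P.map Y) {f : β → ℝ≥0∞}
    (hf : Measurable f) :
    ∫⁻ ω, f (X ω) ∂P = ∫⁻ ω, f (Y ω) ∂P :=
  (IdentDistrib.comp ⟨hX.aemeasurable, hY.aemeasurable, h⟩ hf).lintegral_eq

end ProbabilityTheory

lemma lintegral_ofReal_add_one {Ω : Type*} [MeasurableSpace Ω] {P : Measure Ω}
    [IsProbabilityMeasure P] {f : Ω → ℝ} (hf : Integrable f P) (hf₁ : ∀ᵐ ω ∂P, 0 ≤ f ω + 1) :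
    ∫⁻ ω, ENNReal.ofReal (f ω + 1) ∂P = ENNReal.ofReal (1 + ∫ ω, f ω ∂P) := by
  rw [← ofReal_integral_eq_lintegral_ofReal (f := fun ω => f ω + 1)
      (hf.add (integrable_const 1)) hf₁,
    integral_add hf (integrable_const 1), integral_const, probReal_univ, smul_eq_mul, mul_one,
    add_comm]

section ThetaTerm

variable {Ω : Type*} {η φ : ℕ → Ω → ℝ}

noncomputable def thetaTermFactor (i : ℕ) : ℕ ⊕ ℕ → ℝ → ℝ≥0∞ :=
  Sum.elim (fun j => if j = i then ENNReal.ofReal else fun x => ENNReal.ofReal (min x 1))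
    fun _ x => ENNReal.ofReal (x + 1)

lemma measurable_thetaTermFactor (i : ℕ) (k : ℕ ⊕ ℕ) : Measurable (thetaTermFactor i k) := by
  rcases k with j | j
  · by_cases hj : j = i <;> simp only [thetaTermFactor, Sum.elim_inl, hj, ↓reduceIte] <;> fun_prop
  · exact (measurable_id.add_const 1).ennreal_ofReal

lemma ofReal_thetaSeq_mul_eq_prod (hη : ∀ n ω, 0 ≤ η n ω) {i : ℕ} (hi : 1 ≤ i) (ω : Ω) :
    ENNReal.ofReal (thetaSeq η i ω * (φ i ω + 1)) =
      ∏ k ∈ (Finset.Icc 1 i).disjSum {i}, thetaTermFactor i k (Sum.elim η φ k ω) := by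
  have hθ : 0 ≤ thetaSeq η i ω :=
    mul_nonneg (hη i ω) (Finset.prod_nonneg fun j _ => le_min (hη j ω) zero_le_one)
  rw [Finset.prod_disjSum, Finset.prod_singleton, ← Finset.Ico_insert_right hi,
    Finset.prod_insert Finset.right_notMem_Ico, ENNReal.ofReal_mul hθ, thetaSeq,
    ENNReal.ofReal_mul (hη i ω),
    ENNReal.ofReal_prod_of_nonneg fun j _ => le_min (hη j ω) zero_le_one]
  simp only [thetaTermFactor, Sum.elim_inl, Sum.elim_inr, ↓reduceIte]
  congr 2
  exact Finset.prod_congr rfl fun j hj => by simp [(Finset.mem_Ico.mp hj).2.ne]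

end ThetaTerm

section Expectation

variable {Ω : Type*} [MeasurableSpace Ω] {P : Measure Ω} {η φ : ℕ → Ω → ℝ}

lemma lintegral_ofReal_thetaSeq_mul (hindep : iIndepFun (Sum.elim η φ) P)
    (hηm : ∀ n, Measurable (η n)) (hφm : ∀ n, Measurable (φ n)) (hη : ∀ n ω, 0 ≤ η n ω)
    (hηid : ∀ n, 1 ≤ n → P.map (η n) = P.map (η 1))
    (hφid : ∀ n, 1 ≤ n → P.map (φ n) = P.map (φ 1)) {i : ℕ} (hi : 1 ≤ i) :
    ∫⁻ ω, ENNReal.ofReal (thetaSeq η i ω * (φ i ω + 1)) ∂P =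
      (∫⁻ ω, ENNReal.ofReal (min (η 1 ω) 1) ∂P) ^ (i - 1) * (∫⁻ ω, ENNReal.ofReal (η 1 ω) ∂P) *
        ∫⁻ ω, ENNReal.ofReal (φ 1 ω + 1) ∂P := by
  have hm : ∀ k, Measurable (Sum.elim η φ k) := by
    rintro (n | n)
    exacts [hηm n, hφm n]
  simp_rw [ofReal_thetaSeq_mul_eq_prod hη hi]
  rw [hindep.lintegral_prod_comp hm (measurable_thetaTermFactor i), Finset.prod_disjSum,
    Finset.prod_singleton, ← Finset.Ico_insert_right hi, Finset.prod_insert Finset.right_notMem_Ico]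
  simp only [thetaTermFactor, Sum.elim_inl, Sum.elim_inr, ↓reduceIte]
  rw [lintegral_comp_eq_of_map_eq (hηm i) (hηm 1) (hηid i hi) ENNReal.measurable_ofReal,
    lintegral_comp_eq_of_map_eq (f := fun x => ENNReal.ofReal (x + 1)) (hφm i) (hφm 1)
      (hφid i hi) (by fun_prop),
    Finset.prod_congr rfl fun j hj => ?_, Finset.prod_const, Nat.card_Ico, mul_comm (∫⁻ _, _ ∂P)]
  obtain ⟨hj1, hji⟩ := Finset.mem_Ico.mp hj
  simp only [hji.ne, ↓reduceIte]
  exact lintegral_comp_eq_of_map_eq (f := fun x => ENNReal.ofReal (min x 1)) (hηm j) (hηm 1)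
    (hηid j hj1) (by fun_prop)

lemma measurable_ofReal_thetaSeq_mul (hηm : ∀ n, Measurable (η n)) (hφm : ∀ n, Measurable (φ n))
    (n : ℕ) : Measurable fun ω => ENNReal.ofReal (thetaSeq η n ω * (φ n ω + 1)) :=
  (((hηm n).mul (Finset.measurable_prod _ fun j _ => (hηm j).min measurable_const)).mul
    ((hφm n).add_const 1)).ennreal_ofReal

lemma lintegral_tsum_ofReal_thetaSeq_mul (hindep : iIndepFun (Sum.elim η φ) P)
    (hηm : ∀ n, Measurable (η n)) (hφm : ∀ n, Measurable (φ n)) (hη : ∀ n ω, 0 ≤ η n ω)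
    (hηid : ∀ n, 1 ≤ n → P.map (η n) = P.map (η 1))
    (hφid : ∀ n, 1 ≤ n → P.map (φ n) = P.map (φ 1)) :
    ∫⁻ ω, ∑' i, ENNReal.ofReal (thetaSeq η (i + 1) ω * (φ (i + 1) ω + 1)) ∂P =
      (1 - ∫⁻ ω, ENNReal.ofReal (min (η 1 ω) 1) ∂P)⁻¹ * (∫⁻ ω, ENNReal.ofReal (η 1 ω) ∂P) *
        ∫⁻ ω, ENNReal.ofReal (φ 1 ω + 1) ∂P := by
  rw [lintegral_tsum fun i => (measurable_ofReal_thetaSeq_mul hηm hφm (i + 1)).aemeasurable]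
  simp_rw [lintegral_ofReal_thetaSeq_mul hindep hηm hφm hη hηid hφid (Nat.le_add_left 1 _),
    Nat.add_sub_cancel, mul_assoc, ENNReal.tsum_mul_right, ENNReal.tsum_geometric]

end Expectation

lemma ENNReal.inv_one_sub_ofReal_mul_ofReal_mul {a b c : ℝ} (ha : 0 ≤ a) (hc₀ : 0 ≤ c)
    (hc₁ : c < 1) :
    (1 - ENNReal.ofReal c)⁻¹ * ENNReal.ofReal a * ENNReal.ofReal b =
      ENNReal.ofReal (a / (1 - c) * b) := by
  have hc : 0 < 1 - c := sub_pos.mpr hc₁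
  rw [ENNReal.ofReal_mul (div_nonneg ha hc.le), ENNReal.ofReal_div_of_pos hc,
    ENNReal.ofReal_sub _ hc₀, ENNReal.ofReal_one, div_eq_mul_inv, mul_comm (ENNReal.ofReal a)]

lemma Yseq_le_toReal_tsum {Ω : Type*} {η φ : ℕ → Ω → ℝ} {ω : Ω}
    (hT : ∑' i, ENNReal.ofReal (thetaSeq η (i + 1) ω * (φ (i + 1) ω + 1)) ≠ ∞) (n : ℕ) :
    Yseq η φ n ω ≤ (∑' i, ENNReal.ofReal (thetaSeq η (i + 1) ω * (φ (i + 1) ω + 1))).toReal := by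
  refine Real.sSup_le ?_ ENNReal.toReal_nonneg
  rintro _ ⟨i, hi, -, rfl⟩
  obtain ⟨j, rfl⟩ := Nat.exists_eq_add_of_le' hi
  calc thetaSeq η (j + 1) ω * (φ (j + 1) ω + 1)
      ≤ (ENNReal.ofReal (thetaSeq η (j + 1) ω * (φ (j + 1) ω + 1))).toReal := by
        rw [ENNReal.toReal_ofReal']
        exact le_max_left _ _
    _ ≤ _ := ENNReal.toReal_mono hT (ENNReal.le_tsum j)

lemma ofReal_iSup_Yseq_le_tsum {Ω : Type*} {η φ : ℕ → Ω → ℝ} (ω : Ω) :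
    ENNReal.ofReal (⨆ n, Yseq η φ n ω) ≤
      ∑' i, ENNReal.ofReal (thetaSeq η (i + 1) ω * (φ (i + 1) ω + 1)) := by
  by_cases hT : ∑' i, ENNReal.ofReal (thetaSeq η (i + 1) ω * (φ (i + 1) ω + 1)) = ∞
  · exact hT ▸ le_top
  · exact (ENNReal.ofReal_le_iff_le_toReal hT).2 (ciSup_le (Yseq_le_toReal_tsum hT))

/-- **Lemma (auxiliary maximal bound).**
Let `{η_n}_{n≥1}` and `{φ_n}_{n≥1}` be i.i.d. sequences of non-negative random variables,
independent between themselves, with `C = E η_1 < ∞` and `E φ_1 < ∞`.  Put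
`η̂_n = min(η_n, 1)`, `Ĉ = E η̂_1` and assume `Ĉ < 1`.  With
`θ_n = η_n ∏_{i<n} η̂_i` and `Y_n = max_{i≤n} θ_i(φ_i+1)`, the supremum
`Y_∞ = sup_n Y_n` is finite almost surely and `E Y_∞ ≤ C (1 + E φ_1)/(1 − Ĉ)`. -/
theorem lisa_markov_lemma
    {Ω : Type*} [MeasurableSpace Ω] (P : Measure Ω) [IsProbabilityMeasure P]
    (η φ : ℕ → Ω → ℝ)
    (hηmeas : ∀ n, Measurable (η n)) (hφmeas : ∀ n, Measurable (φ n))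
    (hηnonneg : ∀ n ω, 0 ≤ η n ω) (hφnonneg : ∀ n ω, 0 ≤ φ n ω)
    -- mutual independence of the whole family {η_n} ∪ {φ_n}
    (hindep : ProbabilityTheory.iIndep
      (fun i : ℕ ⊕ ℕ => match i with
        | Sum.inl n => MeasurableSpace.comap (η n) inferInstance
        | Sum.inr n => MeasurableSpace.comap (φ n) inferInstance) P)
    -- identical distributions within each sequence
    (hηiid : ∀ n m, 1 ≤ n → 1 ≤ m → Measure.map (η n) P = Measure.map (η m) P)
    (hφiid : ∀ n m, 1 ≤ n → 1 ≤ m → Measure.map (φ n) P = Measure.map (φ m) P)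
    (hηint : Integrable (η 1) P) (hφint : Integrable (φ 1) P)
    (C Chat : ℝ)
    (hC : C = ∫ ω, η 1 ω ∂P) (hChat : Chat = ∫ ω, min (η 1 ω) 1 ∂P)
    (hChat1 : Chat < 1) :
    (∀ᵐ ω ∂P, BddAbove (Set.range fun n => Yseq η φ n ω)) ∧
      ∫⁻ ω, ENNReal.ofReal (⨆ n, Yseq η φ n ω) ∂P ≤
        ENNReal.ofReal (C / (1 - Chat) * (1 + ∫ ω, φ 1 ω ∂P)) := by
  have hindepFun : iIndepFun (Sum.elim η φ) P := by
    rw [iIndepFun_iff_iIndep]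
    convert hindep using 2 with k
    cases k <;> rfl
  have hηmin_nonneg : ∀ ω, 0 ≤ min (η 1 ω) 1 := fun ω => le_min (hηnonneg 1 ω) zero_le_one
  have hEη : ∫⁻ ω, ENNReal.ofReal (η 1 ω) ∂P = ENNReal.ofReal C := by
    rw [hC, ofReal_integral_eq_lintegral_ofReal hηint (ae_of_all _ (hηnonneg 1))]
  have hEηmin : ∫⁻ ω, ENNReal.ofReal (min (η 1 ω) 1) ∂P = ENNReal.ofReal Chat := by
    rw [hChat, ofReal_integral_eq_lintegral_ofReal (f := fun ω => min (η 1 ω) 1)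
      (hηint.inf (integrable_const 1)) (ae_of_all _ hηmin_nonneg)]
  set T : Ω → ℝ≥0∞ := fun ω => ∑' i, ENNReal.ofReal (thetaSeq η (i + 1) ω * (φ (i + 1) ω + 1))
  have hET : ∫⁻ ω, T ω ∂P = ENNReal.ofReal (C / (1 - Chat) * (1 + ∫ ω, φ 1 ω ∂P)) := by
    rw [lintegral_tsum_ofReal_thetaSeq_mul hindepFun hηmeas hφmeas hηnonneg
      (fun n hn => hηiid n 1 hn le_rfl) (fun n hn => hφiid n 1 hn le_rfl), hEη, hEηmin,
      lintegral_ofReal_add_one hφint (ae_of_all _ fun ω => add_nonneg (hφnonneg 1 ω) zero_le_one),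
      ENNReal.inv_one_sub_ofReal_mul_ofReal_mul (hC ▸ integral_nonneg (hηnonneg 1))
        (hChat ▸ integral_nonneg hηmin_nonneg) hChat1]
  have hT : ∀ᵐ ω ∂P, T ω ≠ ∞ := (ae_lt_top (Measurable.tsum fun i =>
    measurable_ofReal_thetaSeq_mul hηmeas hφmeas (i + 1)) (hET ▸ ENNReal.ofReal_ne_top)).mono
      fun _ => LT.lt.ne
  exact ⟨hT.mono fun ω hω => ⟨_, Set.forall_mem_range.2 (Yseq_le_toReal_tsum hω)⟩,
    (lintegral_mono ofReal_iSup_Yseq_le_tsum).trans hET.le⟩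
end

section
/- For finitely many pairs of probability measures F_1,…,F_m and G_1,…,G_m on a metric space and non-negative weights α_1,…,α_m, the Lévy–Prokhorov distance satisfies ρ(∑_{k=1}^m α_k F_k, ∑_{k=1}^m α_k G_k) ≤ max(1, ∑_{k=1}^m α_k) · max_{1≤k≤m} ρ(F_k, G_k). -/
/-!
If `ρ(μ_k, ν_k) < c` for every `k`, then `μ_k B ≤ ν_k (B_c) + c` for every Borel set `B`,
where `B_c` is the open `c`-thickening of `B`; weighting by `w_k` and summing gives
`(∑ w_k μ_k) B ≤ (∑ w_k ν_k) (B_c) + (∑ w_k) c`. Enlarging both the thickening radius and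
the additive error to `max 1 (∑ w_k) · c` shows `ρ(∑ w_k μ_k, ∑ w_k ν_k) ≤ max 1 (∑ w_k) · c`,
and it remains to let `c` decrease to `max_k ρ(μ_k, ν_k)`.
-/

open MeasureTheory Metric ENNReal

namespace MeasureTheory

variable {Ω ι : Type*} [MeasurableSpace Ω] [PseudoEMetricSpace Ω]
  {s : Finset ι} {μ ν : ι → Measure Ω} {w : ι → ℝ≥0∞}

lemma finset_sum_smul_apply_le_of_levyProkhorovEDist_lt {c : ℝ≥0∞}
    (h : ∀ k ∈ s, levyProkhorovEDist (μ k) (ν k) < c) {B : Set Ω} (hB : MeasurableSet B) :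
    (∑ k ∈ s, w k • μ k) B ≤
      (∑ k ∈ s, w k • ν k) (thickening c.toReal B) + (∑ k ∈ s, w k) * c := by
  simp only [Measure.coe_finsetSum, Measure.coe_smul, Finset.sum_apply, Pi.smul_apply,
    smul_eq_mul, Finset.sum_mul, ← Finset.sum_add_distrib, ← mul_add]
  exact Finset.sum_le_sum fun k hk ↦
    mul_le_mul_right (left_measure_le_of_levyProkhorovEDist_lt (h k hk) hB) _

lemma levyProkhorovEDist_finset_sum_smul_le_of_lt {c : ℝ≥0∞}
    (h : ∀ k ∈ s, levyProkhorovEDist (μ k) (ν k) < c) :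
    levyProkhorovEDist (∑ k ∈ s, w k • μ k) (∑ k ∈ s, w k • ν k) ≤
      max 1 (∑ k ∈ s, w k) * c := by
  have one_sided {μ ν : ι → Measure Ω} (h : ∀ k ∈ s, levyProkhorovEDist (μ k) (ν k) < c)
      {B : Set Ω} (hB : MeasurableSet B) :
      (∑ k ∈ s, w k • μ k) B ≤ (∑ k ∈ s, w k • ν k)
        (thickening (max 1 (∑ k ∈ s, w k) * c).toReal B) + max 1 (∑ k ∈ s, w k) * c := by
    by_cases hinf : max 1 (∑ k ∈ s, w k) * c = ∞
    · simp [hinf]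
    have hc : c ≤ max 1 (∑ k ∈ s, w k) * c := le_mul_of_one_le_left' (le_max_left _ _)
    refine (finset_sum_smul_apply_le_of_levyProkhorovEDist_lt h hB).trans (add_le_add ?_ ?_)
    · exact measure_mono (thickening_mono (toReal_mono hinf hc) B)
    · exact mul_le_mul_left (le_max_right _ _) c
  refine sInf_le fun B hB ↦ ⟨one_sided h hB, one_sided (fun k hk ↦ ?_) hB⟩
  exact levyProkhorovEDist_comm (μ k) (ν k) ▸ h k hk

lemma levyProkhorovEDist_finset_sum_smul_le {δ : ℝ≥0∞} (hw : ∑ k ∈ s, w k ≠ ∞)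
    (h : ∀ k ∈ s, levyProkhorovEDist (μ k) (ν k) ≤ δ) :
    levyProkhorovEDist (∑ k ∈ s, w k • μ k) (∑ k ∈ s, w k • ν k) ≤
      max 1 (∑ k ∈ s, w k) * δ := by
  have hC₀ : max 1 (∑ k ∈ s, w k) ≠ 0 := (one_pos.trans_le (le_max_left _ _)).ne'
  have hC : max 1 (∑ k ∈ s, w k) ≠ ∞ := max_ne_top one_ne_top hw
  rw [← ENNReal.div_le_iff' hC₀ hC]
  refine le_of_forall_gt_imp_ge_of_dense fun c hc ↦ (ENNReal.div_le_iff' hC₀ hC).2 ?_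
  exact levyProkhorovEDist_finset_sum_smul_le_of_lt fun k hk ↦ (h k hk).trans_lt hc

end MeasureTheory

/-- **Subadditivity of the Lévy–Prokhorov distance under mixtures.**
For probability measures `F_1,…,F_m`, `G_1,…,G_m` on a metric space and non-negative
weights `α_1,…,α_m`, one has
`ρ(∑ α_k F_k, ∑ α_k G_k) ≤ max(1, ∑ α_k) · max_k ρ(F_k, G_k)`. -/
theorem levyProkhorov_mixture_bound
    {X : Type*} [MetricSpace X] [MeasurableSpace X] [BorelSpace X]
    (m : ℕ) (hm : 0 < m)
    (F G : Fin m → Measure X)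
    (hF : ∀ k, IsProbabilityMeasure (F k)) (hG : ∀ k, IsProbabilityMeasure (G k))
    (α : Fin m → ℝ) (hα : ∀ k, 0 ≤ α k) :
    levyProkhorovDist (∑ k, ENNReal.ofReal (α k) • F k) (∑ k, ENNReal.ofReal (α k) • G k) ≤
      max 1 (∑ k, α k) *
        Finset.univ.sup' (Finset.univ_nonempty_iff.mpr ⟨⟨0, hm⟩⟩)
          (fun k => levyProkhorovDist (F k) (G k)) := by
  set M := Finset.univ.sup' (Finset.univ_nonempty_iff.mpr ⟨⟨0, hm⟩⟩)
    (fun k => levyProkhorovDist (F k) (G k))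
  have hle_M (k : Fin m) : levyProkhorovDist (F k) (G k) ≤ M :=
    Finset.le_sup' (fun k => levyProkhorovDist (F k) (G k)) (Finset.mem_univ k)
  have hM : 0 ≤ M := toReal_nonneg.trans (hle_M ⟨0, hm⟩)
  have hedist (k : Fin m) : levyProkhorovEDist (F k) (G k) ≤ ENNReal.ofReal M :=
    (le_ofReal_iff_toReal_le (levyProkhorovEDist_ne_top _ _) hM).2 (hle_M k)
  have hsum : ∑ k, ENNReal.ofReal (α k) = ENNReal.ofReal (∑ k, α k) :=
    (ofReal_sum_of_nonneg fun k _ ↦ hα k).symm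
  apply toReal_le_of_le_ofReal (mul_nonneg (zero_le_one.trans (le_max_left _ _)) hM)
  calc _ ≤ max 1 (∑ k, ENNReal.ofReal (α k)) * ENNReal.ofReal M :=
        levyProkhorovEDist_finset_sum_smul_le (by simp [hsum]) fun k _ ↦ hedist k
    _ = ENNReal.ofReal (max 1 (∑ k, α k) * M) := by
        rw [hsum, ofReal_mul (zero_le_one.trans (le_max_left _ _)), ofReal_max, ofReal_one]
end

section
/- In the Polya urn scheme started with one black and one white ball, the proportion of black balls after n steps converges almost surely as n → ∞ to a random variable which is uniformly distributed on [0,1] (i.e. Beta(1,1) distributed). -/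
/-!
The proportion `Mₙ = Bₙ / (n + 2)` of black balls is a martingale with values in `[0, 1]`: given
the past, a black ball is added with probability `Mₙ`, and `(Bₙ + Mₙ) / (n + 3) = Mₙ`. Hence it
converges almost surely to some `Z`. On the other hand `Bₙ` is uniformly distributed on
`{1, …, n + 1}`, so `P (Mₙ ≤ t) → t` for `t ∈ [0, 1)`. Almost sure convergence implies weak
convergence of the laws, and the portmanteau inequalities `P (Z < t) ≤ t ≤ P (Z ≤ t)` pin down
the distribution function of `Z` as that of the uniform law.
-/

open MeasureTheory ProbabilityTheory Filter Set
open scoped ENNReal Topology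

section UniformIndependent

variable {Ω : Type*} {m mΩ : MeasurableSpace Ω} {P : Measure Ω} {V : Ω → ℝ}

lemma measure_inter_preimage_of_indep_uniform (hV : Measurable V)
    (hlaw : P.map V = volume.restrict (Icc 0 1)) (hind : Indep m (.comap V inferInstance) P)
    {A : Set Ω} (hA : MeasurableSet[m] A) {S : Set ℝ} (hS : MeasurableSet S) :
    P (A ∩ V ⁻¹' S) = P A * volume (S ∩ Icc 0 1) := by
  rw [(Indep_iff _ _ _).mp hind A _ hA ⟨S, hS, rfl⟩, ← Measure.restrict_apply hS, ← hlaw,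
    Measure.map_apply hV hS]

lemma measure_inter_lt_of_indep_uniform (hV : Measurable V)
    (hlaw : P.map V = volume.restrict (Icc 0 1)) (hind : Indep m (.comap V inferInstance) P)
    {A : Set Ω} (hA : MeasurableSet[m] A) {c : ℝ} (hc : c ≤ 1) :
    P (A ∩ {ω | V ω < c}) = P A * ENNReal.ofReal c := by
  change P (A ∩ V ⁻¹' Iio c) = _
  rw [measure_inter_preimage_of_indep_uniform hV hlaw hind hA measurableSet_Iio,
    show Iio c ∩ Icc 0 1 = Ico 0 c by
      ext x; simp only [mem_inter_iff, mem_Iio, mem_Icc, mem_Ico]; grind,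
    Real.volume_Ico, sub_zero]

lemma measure_inter_le_of_indep_uniform (hV : Measurable V)
    (hlaw : P.map V = volume.restrict (Icc 0 1)) (hind : Indep m (.comap V inferInstance) P)
    {A : Set Ω} (hA : MeasurableSet[m] A) {c : ℝ} (hc : 0 ≤ c) :
    P (A ∩ {ω | c ≤ V ω}) = P A * ENNReal.ofReal (1 - c) := by
  change P (A ∩ V ⁻¹' Ici c) = _
  rw [measure_inter_preimage_of_indep_uniform hV hlaw hind hA measurableSet_Ici,
    show Ici c ∩ Icc 0 1 = Icc c 1 by ext x; simp only [mem_inter_iff, mem_Ici, mem_Icc]; grind,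
    Real.volume_Icc]

lemma measure_inter_lt_comp_of_indep_uniform {α : Type*} [Countable α] [MeasurableSpace α]
    [MeasurableSingletonClass α] (hm : m ≤ mΩ) (hV : Measurable V)
    (hlaw : P.map V = volume.restrict (Icc 0 1)) (hind : Indep m (.comap V inferInstance) P)
    {X : Ω → α} (hX : Measurable[m] X) {c : α → ℝ} (hc : ∀ ω, c (X ω) ≤ 1)
    {A : Set Ω} (hA : MeasurableSet[m] A) :
    P (A ∩ {ω | V ω < c (X ω)}) = ∫⁻ ω in A, ENNReal.ofReal (c (X ω)) ∂P := by
  have hfiber : ∀ a, MeasurableSet[m] (A ∩ X ⁻¹' {a}) := fun a =>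
    hA.inter (hX (measurableSet_singleton a))
  have hsplit : A ∩ {ω | V ω < c (X ω)} = ⋃ a, A ∩ X ⁻¹' {a} ∩ {ω | V ω < c a} := by
    ext ω; simp
  rw [hsplit, measure_iUnion, ← lintegral_map (f := fun a => ENNReal.ofReal (c a))
    (measurable_of_countable _) (hX.mono hm le_rfl), lintegral_countable']
  · refine tsum_congr fun a => ?_
    rw [Measure.map_apply (hX.mono hm le_rfl) (measurableSet_singleton a),
      Measure.restrict_apply' (hm _ hA), inter_comm (X ⁻¹' {a}), mul_comm]
    by_cases ha : a ∈ range X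
    · obtain ⟨ω, rfl⟩ := ha
      exact measure_inter_lt_of_indep_uniform hV hlaw hind (hfiber _) (hc ω)
    · simp [preimage_singleton_eq_empty.mpr ha]
  · exact fun a b hab => ((pairwise_disjoint_fiber X hab).mono inter_subset_right
      inter_subset_right).mono inter_subset_left inter_subset_left
  · exact fun a => (hm _ (hfiber a)).inter (measurableSet_lt hV measurable_const)

end UniformIndependent

section AeTendsto

variable {Ω : Type*} [MeasurableSpace Ω] {P : Measure Ω} [IsProbabilityMeasure P]
  {X : ℕ → Ω → ℝ} {Z : Ω → ℝ}

lemma measure_lt_le_of_ae_tendsto (hX : ∀ n, Measurable (X n)) (hZ : Measurable Z)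
    (hXZ : ∀ᵐ ω ∂P, Tendsto (fun n => X n ω) atTop (𝓝 (Z ω))) {t : ℝ} {F : ℝ≥0∞}
    (hF : Tendsto (fun n => P {ω | X n ω ≤ t}) atTop (𝓝 F)) :
    P {ω | Z ω < t} ≤ F := by
  have h := (tendstoInDistribution_of_ae_tendsto (fun n => (hX n).aemeasurable)
    hZ.aemeasurable hXZ).tendsto
  calc P {ω | Z ω < t} = P.map Z (Iio t) := (Measure.map_apply hZ measurableSet_Iio).symm
    _ ≤ atTop.liminf fun n => P.map (X n) (Iio t) :=
      ProbabilityMeasure.le_liminf_measure_open_of_tendsto h isOpen_Iio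
    _ ≤ atTop.liminf fun n => P {ω | X n ω ≤ t} := by
      refine liminf_le_liminf (Eventually.of_forall fun n => ?_)
      rw [Measure.map_apply (hX n) measurableSet_Iio]
      exact measure_mono fun ω (hω : X n ω < t) => hω.le
    _ = F := hF.liminf_eq

lemma le_measure_le_of_ae_tendsto (hX : ∀ n, Measurable (X n)) (hZ : Measurable Z)
    (hXZ : ∀ᵐ ω ∂P, Tendsto (fun n => X n ω) atTop (𝓝 (Z ω))) {t : ℝ} {F : ℝ≥0∞}
    (hF : Tendsto (fun n => P {ω | X n ω ≤ t}) atTop (𝓝 F)) :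
    F ≤ P {ω | Z ω ≤ t} := by
  have h := (tendstoInDistribution_of_ae_tendsto (fun n => (hX n).aemeasurable)
    hZ.aemeasurable hXZ).tendsto
  calc F = atTop.limsup fun n => P.map (X n) (Iic t) := by
        simp_rw [Measure.map_apply (hX _) measurableSet_Iic]
        exact hF.limsup_eq.symm
    _ ≤ P.map Z (Iic t) := ProbabilityMeasure.limsup_measure_closed_le_of_tendsto h isClosed_Iic
    _ = P {ω | Z ω ≤ t} := Measure.map_apply hZ measurableSet_Iic

end AeTendsto

lemma eq_volume_restrict_Icc_of_measure_Iio_le_le_measure_Iic {μ : Measure ℝ}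
    [IsProbabilityMeasure μ] (hlt : ∀ t ∈ Ioo (0 : ℝ) 1, μ (Iio t) ≤ ENNReal.ofReal t)
    (hle : ∀ t ∈ Ioo (0 : ℝ) 1, ENNReal.ofReal t ≤ μ (Iic t)) :
    μ = volume.restrict (Icc 0 1) := by
  have hofReal : ∀ t : ℝ, Tendsto ENNReal.ofReal (𝓝 t) (𝓝 (ENNReal.ofReal t)) := fun t =>
    ENNReal.continuous_ofReal.tendsto t
  have hcdf : ∀ t ∈ Icc (0 : ℝ) 1, μ (Iic t) = ENNReal.ofReal t := by
    rintro t ⟨h0, h1⟩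
    apply le_antisymm
    · rcases h1.lt_or_eq with h1 | rfl
      · refine ge_of_tendsto ((hofReal t).mono_left (nhdsWithin_le_nhds (s := Ioi t))) ?_
        filter_upwards [Ioo_mem_nhdsGT h1] with s hs
        exact (measure_mono (Iic_subset_Iio.mpr hs.1)).trans (hlt s ⟨h0.trans_lt hs.1, hs.2⟩)
      · simp [prob_le_one]
    · rcases h0.lt_or_eq with h0 | rfl
      · refine le_of_tendsto ((hofReal t).mono_left (nhdsWithin_le_nhds (s := Iio t))) ?_
        filter_upwards [Ioo_mem_nhdsLT h0] with s hs
        exact (hle s ⟨hs.1, hs.2.trans_le h1⟩).trans (measure_mono (Iic_subset_Iic.mpr hs.2.le))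
      · simp
  refine Measure.ext_of_Iic _ _ fun t => ?_
  rw [Measure.restrict_apply measurableSet_Iic]
  rcases lt_or_ge t 0 with ht0 | ht0
  · rw [show Iic t ∩ Icc 0 1 = ∅ by ext x; simp only [mem_inter_iff, mem_Iic, mem_Icc]; grind,
      measure_empty]
    exact measure_mono_null (Iic_subset_Iic.mpr ht0.le) ((hcdf 0 (by simp)).trans (by simp))
  rcases le_or_gt t 1 with ht1 | ht1
  · rw [show Iic t ∩ Icc 0 1 = Icc 0 t by ext x; simp only [mem_inter_iff, mem_Iic, mem_Icc]; grind,
      Real.volume_Icc, sub_zero, hcdf t ⟨ht0, ht1⟩]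
  · rw [show Iic t ∩ Icc 0 1 = Icc 0 1 by ext x; simp only [mem_inter_iff, mem_Iic, mem_Icc]; grind,
      Real.volume_Icc, sub_zero, ENNReal.ofReal_one]
    refine le_antisymm prob_le_one ?_
    calc 1 = μ (Iic 1) := by rw [hcdf 1 (by simp), ENNReal.ofReal_one]
      _ ≤ μ (Iic t) := measure_mono (Iic_subset_Iic.mpr ht1.le)

lemma indep_natural_comap_of_iIndepFun {Ω β : Type*} {mΩ : MeasurableSpace Ω}
    {P : Measure Ω} [TopologicalSpace β] [TopologicalSpace.MetrizableSpace β] [MeasurableSpace β]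
    [SecondCountableTopology β] [BorelSpace β] {U : ℕ → Ω → β} (hUmeas : ∀ n, Measurable (U n))
    (hU : iIndepFun U P) {n j : ℕ} (hnj : n < j) :
    Indep (Filtration.natural U (fun i => (hUmeas i).stronglyMeasurable) n)
      (.comap (U j) inferInstance) P := by
  have h := indep_iSup_of_disjoint (fun i => (hUmeas i).comap_le) hU
    (S := Iic n) (T := {j}) (by simpa using hnj)
  rwa [iSup_singleton] at h

namespace PolyaUrn

variable {Ω : Type*} {mΩ : MeasurableSpace Ω} {ℱ : Filtration ℕ mΩ} {P : Measure Ω}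
  {U : ℕ → Ω → ℝ} {B : ℕ → Ω → ℕ}

noncomputable def proportion (B : ℕ → Ω → ℕ) (n : ℕ) (ω : Ω) : ℝ := (B n ω : ℝ) / (n + 2)

structure IsPolyaUrn (ℱ : Filtration ℕ mΩ) (P : Measure Ω) (U : ℕ → Ω → ℝ) (B : ℕ → Ω → ℕ) :
    Prop where
  adapted : ∀ n, Measurable[ℱ n] (U n)
  map_eq : ∀ n, P.map (U (n + 1)) = volume.restrict (Icc 0 1)
  indep : ∀ n, Indep (ℱ n) (.comap (U (n + 1)) inferInstance) P
  zero : ∀ ω, B 0 ω = 1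
  succ : ∀ n ω, B (n + 1) ω = if U (n + 1) ω < proportion B n ω then B n ω + 1 else B n ω

lemma mem_Icc (hB0 : ∀ ω, B 0 ω = 1)
    (hBrec : ∀ n ω, B (n + 1) ω = if U (n + 1) ω < proportion B n ω then B n ω + 1 else B n ω)
    (n : ℕ) (ω : Ω) : B n ω ∈ Icc 1 (n + 1) := by
  induction n with
  | zero => simp [hB0]
  | succ n ih => rw [hBrec]; split_ifs <;> grind

lemma proportion_mem_Icc (hB0 : ∀ ω, B 0 ω = 1)
    (hBrec : ∀ n ω, B (n + 1) ω = if U (n + 1) ω < proportion B n ω then B n ω + 1 else B n ω)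
    (n : ℕ) (ω : Ω) : proportion B n ω ∈ Icc 0 1 := by
  have hB : (B n ω : ℝ) ≤ n + 1 := by exact_mod_cast (mem_Icc hB0 hBrec n ω).2
  exact ⟨by unfold proportion; positivity, by rw [proportion, div_le_one (by positivity)]; linarith⟩

lemma norm_proportion_le_one (hB0 : ∀ ω, B 0 ω = 1)
    (hBrec : ∀ n ω, B (n + 1) ω = if U (n + 1) ω < proportion B n ω then B n ω + 1 else B n ω)
    (n : ℕ) (ω : Ω) : ‖proportion B n ω‖ ≤ 1 := by
  obtain ⟨h0, h1⟩ := proportion_mem_Icc hB0 hBrec n ω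
  rwa [Real.norm_of_nonneg h0]

lemma step_eq_succ_iff {b j n : ℕ} {u : ℝ} :
    (if u < (b : ℝ) / (n + 2) then b + 1 else b) = j + 1 ↔
      (b = j ∧ u < j / (n + 2)) ∨ (b = j + 1 ∧ (j + 1 : ℝ) / (n + 2) ≤ u) := by
  rcases eq_or_ne b j with rfl | hbj
  · split_ifs with hu <;> simp [hu]
  rcases eq_or_ne b (j + 1) with rfl | hbj'
  · split_ifs with hu <;> push_cast at hu ⊢ <;> simp [hu, not_lt.mp]
  · split_ifs <;> simp [hbj, hbj']

lemma measurable (hU : ∀ n, Measurable[ℱ n] (U n)) (hB0 : ∀ ω, B 0 ω = 1)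
    (hBrec : ∀ n ω, B (n + 1) ω = if U (n + 1) ω < proportion B n ω then B n ω + 1 else B n ω)
    (n : ℕ) : Measurable[ℱ n] (B n) := by
  induction n with
  | zero => simp only [funext hB0, measurable_const]
  | succ n ih =>
    have ih' := ih.mono (ℱ.mono n.le_succ) le_rfl
    rw [funext (hBrec n)]
    exact Measurable.ite (measurableSet_lt (hU _) ((measurable_from_top.comp ih').div_const _))
      (ih'.add_const 1) ih'

lemma proportion_succ
    (hBrec : ∀ n ω, B (n + 1) ω = if U (n + 1) ω < proportion B n ω then B n ω + 1 else B n ω)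
    (n : ℕ) (ω : Ω) : proportion B (n + 1) ω =
      ((n + 2) * proportion B n ω + {ω | U (n + 1) ω < proportion B n ω}.indicator 1 ω) /
        (n + 3) := by
  rw [proportion, hBrec n ω]
  simp only [indicator_apply, mem_ofPred_eq, Pi.one_apply]
  split_ifs <;> unfold proportion <;> push_cast <;> field_simp <;> ring

theorem IsPolyaUrn.martingale [IsFiniteMeasure P] (h : IsPolyaUrn ℱ P U B) :
    Martingale (proportion B) ℱ P := by
  have hadapted n : Measurable[ℱ n] (proportion B n) :=
    (measurable_from_top.comp (measurable h.adapted h.zero h.succ n)).div_const _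
  have hbound n ω := proportion_mem_Icc h.zero h.succ n ω
  have hint n : Integrable (proportion B n) P :=
    .of_bound ((hadapted n).mono (ℱ.le n) le_rfl).aestronglyMeasurable 1
      (ae_of_all _ (norm_proportion_le_one h.zero h.succ n))
  refine martingale_of_setIntegral_eq_succ (fun n => (hadapted n).stronglyMeasurable) hint
    fun n A hA => ?_
  have hUmeas : Measurable (U (n + 1)) := (h.adapted _).mono (ℱ.le _) le_rfl
  simp_rw [proportion_succ h.succ n]
  set E := {ω | U (n + 1) ω < proportion B n ω}
  have hE : MeasurableSet E := measurableSet_lt hUmeas ((hadapted n).mono (ℱ.le n) le_rfl)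
  have hdraw : P.real (A ∩ E) = ∫ ω in A, proportion B n ω ∂P := by
    have hlint := measure_inter_lt_comp_of_indep_uniform (ℱ.le n) hUmeas (h.map_eq n)
      (h.indep n) (measurable h.adapted h.zero h.succ n) (c := fun k : ℕ => (k : ℝ) / (n + 2))
      (fun ω => (hbound n ω).2) hA
    rw [measureReal_def,
      show P (A ∩ E) = ∫⁻ ω in A, ENNReal.ofReal (proportion B n ω) ∂P from hlint,
      ← ofReal_integral_eq_lintegral_ofReal (hint n).integrableOn
        (ae_of_all _ fun ω => (hbound n ω).1),
      ENNReal.toReal_ofReal (setIntegral_nonneg (ℱ.le n _ hA) fun ω _ => (hbound n ω).1)]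
  have hEint : Integrable (E.indicator (1 : Ω → ℝ)) P := (integrable_const 1).indicator hE
  rw [integral_div, integral_add ((hint n).integrableOn.const_mul _) hEint.integrableOn,
    integral_const_mul, integral_indicator_one hE, measureReal_restrict_apply hE, inter_comm,
    hdraw]
  field_simp
  ring

theorem IsPolyaUrn.ae_tendsto_limitProcess [IsProbabilityMeasure P] (h : IsPolyaUrn ℱ P U B) :
    ∀ᵐ ω ∂P, Tendsto (fun n => proportion B n ω) atTop
      (𝓝 (ℱ.limitProcess (proportion B) P ω)) := by
  refine h.martingale.submartingale.ae_tendsto_limitProcess (R := 1) fun n => ?_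
  simpa using eLpNorm_le_of_ae_bound (p := 1) (μ := P)
    (ae_of_all _ (norm_proportion_le_one h.zero h.succ n))

lemma IsPolyaUrn.measure_succ_eq (h : IsPolyaUrn ℱ P U B) {n j : ℕ} (hj : j ≤ n + 1) :
    P {ω | B (n + 1) ω = j + 1} =
      P {ω | B n ω = j} * ENNReal.ofReal (j / (n + 2)) +
        P {ω | B n ω = j + 1} * ENNReal.ofReal (1 - (j + 1) / (n + 2)) := by
  have hUmeas : Measurable (U (n + 1)) := (h.adapted _).mono (ℱ.le _) le_rfl
  have hBn : ∀ i, MeasurableSet[ℱ n] {ω | B n ω = i} := fun i =>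
    measurable h.adapted h.zero h.succ n (measurableSet_singleton i)
  have hsplit : {ω | B (n + 1) ω = j + 1} =
      ({ω | B n ω = j} ∩ {ω | U (n + 1) ω < j / (n + 2)}) ∪
      ({ω | B n ω = j + 1} ∩ {ω | (j + 1 : ℝ) / (n + 2) ≤ U (n + 1) ω}) := by
    ext ω
    simp only [mem_ofPred_eq, mem_union, mem_inter_iff, h.succ n ω]
    exact step_eq_succ_iff
  have hdisj : Disjoint ({ω | B n ω = j} ∩ {ω | U (n + 1) ω < j / (n + 2)})
      ({ω | B n ω = j + 1} ∩ {ω | (j + 1 : ℝ) / (n + 2) ≤ U (n + 1) ω}) :=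
    disjoint_left.mpr fun ω hω hω' => by grind
  rw [hsplit,
    measure_union hdisj ((ℱ.le n _ (hBn _)).inter (measurableSet_le measurable_const hUmeas)),
    measure_inter_lt_of_indep_uniform hUmeas (h.map_eq n) (h.indep n) (hBn j)
      ((div_le_one (by positivity)).mpr (by exact_mod_cast hj.trans n.succ.le_succ)),
    measure_inter_le_of_indep_uniform hUmeas (h.map_eq n) (h.indep n) (hBn (j + 1))
      (by positivity)]

theorem IsPolyaUrn.measure_eq [IsProbabilityMeasure P] (h : IsPolyaUrn ℱ P U B) (n : ℕ)
    {k : ℕ} (hk : k ∈ Icc 1 (n + 1)) : P {ω | B n ω = k} = (n + 1 : ℝ≥0∞)⁻¹ := by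
  induction n generalizing k with
  | zero =>
    obtain rfl : k = 1 := by simpa using hk
    simp [h.zero]
  | succ n ih =>
    obtain ⟨j, rfl⟩ : ∃ j, k = j + 1 := ⟨k - 1, by grind⟩
    have hj : j ≤ n + 1 := by grind
    -- `P {B n = 0}` and `P {B n = n + 2}` only occur multiplied by `0`
    have hblack : P {ω | B n ω = j} * ENNReal.ofReal (j / (n + 2)) =
        (n + 1 : ℝ≥0∞)⁻¹ * ENNReal.ofReal (j / (n + 2)) := by
      rcases j.eq_zero_or_pos with rfl | hj0
      · simp
      · rw [ih ⟨hj0, hj⟩]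
    have hwhite : P {ω | B n ω = j + 1} * ENNReal.ofReal (1 - (j + 1) / (n + 2)) =
        (n + 1 : ℝ≥0∞)⁻¹ * ENNReal.ofReal (1 - (j + 1) / (n + 2)) := by
      rcases hj.lt_or_eq with hj | rfl
      · rw [ih ⟨by omega, hj⟩]
      · have : (1 : ℝ) - ((n + 1 : ℕ) + 1) / (n + 2) = 0 := by push_cast; field_simp; ring
        rw [this, ENNReal.ofReal_zero, mul_zero, mul_zero]
    have hj' : (j + 1 : ℝ) ≤ n + 2 := by exact_mod_cast Nat.succ_le_succ hj
    rw [h.measure_succ_eq hj, hblack, hwhite, ← mul_add, ← ENNReal.ofReal_add (by positivity)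
        (sub_nonneg.mpr ((div_le_one (by positivity)).mpr hj')),
      show (j : ℝ) / (n + 2) + (1 - (j + 1) / (n + 2)) = ((n + 1 : ℕ) : ℝ) / ((n + 2 : ℕ) : ℝ) by
        push_cast; field_simp; ring,
      ENNReal.ofReal_div_of_pos (by positivity), ENNReal.ofReal_natCast, ENNReal.ofReal_natCast]
    push_cast
    rw [← mul_div_assoc, ENNReal.inv_mul_cancel (by positivity) (by simp), one_div]
    ring_nf

theorem IsPolyaUrn.measure_le [IsProbabilityMeasure P] (h : IsPolyaUrn ℱ P U B) {n m : ℕ}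
    (hm : m ≤ n + 1) : P {ω | B n ω ≤ m} = m * (n + 1 : ℝ≥0∞)⁻¹ := by
  have hunion : {ω | B n ω ≤ m} = ⋃ k ∈ Finset.Icc 1 m, {ω | B n ω = k} := by
    ext ω
    have := (mem_Icc h.zero h.succ n ω).1
    simp only [mem_ofPred_eq, mem_iUnion, Finset.mem_Icc, exists_prop]
    exact ⟨fun h => ⟨_, ⟨this, h⟩, rfl⟩, by rintro ⟨k, hk, rfl⟩; exact hk.2⟩
  have hmeas k : MeasurableSet {ω | B n ω = k} :=
    (measurable h.adapted h.zero h.succ n).mono (ℱ.le n) le_rfl (measurableSet_singleton k)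
  rw [hunion, measure_biUnion_finset (fun i _ j _ hij => disjoint_left.mpr fun ω hi hj => hij
      (hi.symm.trans hj)) fun k _ => hmeas k,
    Finset.sum_congr rfl fun k hk => h.measure_eq n (by grind), Finset.sum_const, Nat.card_Icc,
    nsmul_eq_mul, Nat.add_sub_cancel]

theorem IsPolyaUrn.tendsto_measure_proportion_le [IsProbabilityMeasure P]
    (h : IsPolyaUrn ℱ P U B) {t : ℝ} (ht0 : 0 ≤ t) (ht1 : t < 1) :
    Tendsto (fun n => P {ω | proportion B n ω ≤ t}) atTop (𝓝 (ENNReal.ofReal t)) := by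
  have hcount n : P {ω | proportion B n ω ≤ t} =
      ENNReal.ofReal (⌊t * (n + 2)⌋₊ / (n + 2) * ((n + 2) / (n + 1))) := by
    have hfloor : ⌊t * (n + 2)⌋₊ ≤ n + 1 :=
      Nat.lt_succ_iff.mp ((Nat.floor_lt (by positivity)).mpr (by push_cast; nlinarith))
    have hevent : {ω | proportion B n ω ≤ t} = {ω | B n ω ≤ ⌊t * (n + 2)⌋₊} := by
      ext ω
      simp only [proportion, mem_ofPred_eq, div_le_iff₀ (by positivity : (0 : ℝ) < n + 2),
        Nat.le_floor_iff (by positivity : 0 ≤ t * (n + 2))]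
    rw [hevent, h.measure_le hfloor, div_mul_div_cancel₀ (by positivity),
      ENNReal.ofReal_div_of_pos (by positivity), ENNReal.ofReal_natCast, div_eq_mul_inv,
      ENNReal.ofReal_add (by positivity) zero_le_one, ENNReal.ofReal_natCast, ENNReal.ofReal_one]
  have hfloor : Tendsto (fun n : ℕ => (⌊t * (n + 2)⌋₊ : ℝ) / (n + 2)) atTop (𝓝 t) :=
    (tendsto_nat_floor_mul_div_atTop ht0).comp
      (tendsto_atTop_add_const_right _ 2 tendsto_natCast_atTop_atTop)
  have hratio : Tendsto (fun n : ℕ => ((n : ℝ) + 2) / (n + 1)) atTop (𝓝 1) := by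
    simpa [add_comm] using tendsto_add_mul_div_add_mul_atTop_nhds (2 : ℝ) 1 1 one_ne_zero
  simp_rw [hcount]
  simpa using ENNReal.tendsto_ofReal (hfloor.mul hratio)

end PolyaUrn

open PolyaUrn in
/-- **Polya urn: the proportion of black balls converges a.s. to a Uniform[0,1] limit.**
Start with one black and one white ball; at each step a ball is chosen uniformly at random
and returned together with one additional ball of the same colour.  The urn is realised by
i.i.d. uniform random variables `U_n` on `[0,1]`: with `B_n` black balls among the `n + 2`
balls present after `n` steps, a black ball is drawn at step `n+1` iff `U_{n+1} < B_n/(n+2)`.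
Then the proportion `B_n/(n+2)` converges almost surely to a random variable which is
uniformly distributed on `[0,1]` (i.e. `Beta(1,1)` distributed). -/
theorem polya_urn_proportion_tendsto_uniform
    {Ω : Type*} [MeasurableSpace Ω] (P : Measure Ω) [IsProbabilityMeasure P]
    (U : ℕ → Ω → ℝ) (hUmeas : ∀ n, Measurable (U n))
    -- the U_n are independent ...
    (hUindep : ProbabilityTheory.iIndepFun U P)
    -- ... and uniformly distributed on [0,1]
    (hUlaw : ∀ n, Measure.map (U n) P = volume.restrict (Set.Icc (0 : ℝ) 1))
    -- the number of black balls: B_0 = 1, and at each step a black ball is added iff a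
    -- black ball is drawn, which happens with conditional probability B_n/(n+2)
    (B : ℕ → Ω → ℕ) (hB0 : ∀ ω, B 0 ω = 1)
    (hBrec : ∀ n ω, B (n + 1) ω =
      if U (n + 1) ω < (B n ω : ℝ) / (n + 2) then B n ω + 1 else B n ω) :
    ∃ Z : Ω → ℝ, Measurable Z ∧
      Measure.map Z P = volume.restrict (Set.Icc (0 : ℝ) 1) ∧
      ∀ᵐ ω ∂P, Filter.Tendsto (fun n => (B n ω : ℝ) / (n + 2)) Filter.atTop (nhds (Z ω)) := by
  set ℱ := Filtration.natural U fun n => (hUmeas n).stronglyMeasurable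
  have hU n : Measurable[ℱ n] (U n) :=
    (Filtration.stronglyAdapted_natural (fun n => (hUmeas n).stronglyMeasurable) n).measurable
  have hurn : IsPolyaUrn ℱ P U B := ⟨hU, fun n => hUlaw (n + 1),
    fun n => indep_natural_comap_of_iIndepFun hUmeas hUindep n.lt_succ_self, hB0, hBrec⟩
  have hmeas n : Measurable (proportion B n) :=
    ((hurn.martingale.stronglyAdapted n).mono (ℱ.le n)).measurable
  set Z := ℱ.limitProcess (proportion B) P
  have hZ : Measurable Z := Filtration.stronglyMeasurable_limit_process'.measurable
  have hcdf {t : ℝ} (ht : t ∈ Ioo (0 : ℝ) 1) := hurn.tendsto_measure_proportion_le ht.1.le ht.2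
  have := Measure.isProbabilityMeasure_map (μ := P) hZ.aemeasurable
  refine ⟨Z, hZ, eq_volume_restrict_Icc_of_measure_Iio_le_le_measure_Iic (fun t ht => ?_)
    (fun t ht => ?_), hurn.ae_tendsto_limitProcess⟩
  · rw [Measure.map_apply hZ measurableSet_Iio]
    exact measure_lt_le_of_ae_tendsto hmeas hZ hurn.ae_tendsto_limitProcess (hcdf ht)
  · rw [Measure.map_apply hZ measurableSet_Iic]
    exact le_measure_le_of_ae_tendsto hmeas hZ hurn.ae_tendsto_limitProcess (hcdf ht)
end

section
/- Let α > 1, β > 0 and 0 < p < 1. Define F(t) = (1−p)e^{βt} for t ≤ 0 and F(t) = 1 − pe^{−αt} for t > 0, and define G(t) = (p/(1−p) + 1)^{−1−β/α} e^{βt} for t < 0 and G(t) = (p/(1−p)·e^{−αt} + 1)^{−1−β/α} for t ≥ 0. Then G satisfies the integral equation: G(t) = ∫_{−∞}^0 G(t−z) dF(z) + (F(t) − F(0)) G(t) for t ≥ 0, and G(t) = ∫_{−∞}^t G(t−z) dF(z) for t < 0, where the integrals are with respect to the Lebesgue–Stieltjes measure of F. -/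
open MeasureTheory Real

/-- The c.d.f. `F(t) = (1−p)e^{βt}` for `t ≤ 0` and `F(t) = 1 − pe^{−αt}` for `t > 0`. -/
noncomputable def Fcdf (α β p : ℝ) (t : ℝ) : ℝ :=
  if t ≤ 0 then (1 - p) * Real.exp (β * t) else 1 - p * Real.exp (-α * t)

/-- The Lebesgue–Stieltjes measure of `F`, given by its density
`(1−p)β e^{βt}` on `(−∞,0]` and `pα e^{−αt}` on `(0,∞)`. -/
noncomputable def FStieltjesMeasure (α β p : ℝ) : Measure ℝ :=
  volume.withDensity fun z =>
    ENNReal.ofReal (if z ≤ 0 then (1 - p) * β * Real.exp (β * z) else p * α * Real.exp (-α * z))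

/-- `G(t) = (p/(1−p) + 1)^{−1−β/α} e^{βt}` for `t < 0` and
`G(t) = (p/(1−p)·e^{−αt} + 1)^{−1−β/α}` for `t ≥ 0`. -/
noncomputable def Gfun (α β p : ℝ) (t : ℝ) : ℝ :=
  if t < 0 then (p / (1 - p) + 1) ^ (-(1 + β / α)) * Real.exp (β * t)
  else (p / (1 - p) * Real.exp (-α * t) + 1) ^ (-(1 + β / α))

/-! On `(-∞, 0]` the measure `dF` has density `(1-p)βe^{βz}`, and for `z ≤ t` one has
`G(t-z) = (c e^{αz} + 1)^{-(1+β/α)}` with `c = p/(1-p) · e^{-αt}`. The integrand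
`βe^{βz}(c e^{αz} + 1)^{-(1+β/α)}` has the antiderivative `e^{βz}(c e^{αz} + 1)^{-β/α}`,
which vanishes at `-∞`, so both integrals are explicit, and the two identities reduce to
`(1-p) · p/(1-p) = p`. -/

open Set Filter Topology

lemma rpow_neg_eq_mul_rpow_neg_one_add {x : ℝ} (hx : 0 < x) (γ : ℝ) :
    x ^ (-γ) = x * x ^ (-(1 + γ)) := by
  rw [show -γ = 1 + -(1 + γ) by ring, rpow_add hx, rpow_one]

section Antiderivative

variable {α β c : ℝ}

lemma hasDerivAt_exp_mul_one_add_exp_rpow (hα : α ≠ 0) (hc : 0 ≤ c) (z : ℝ) :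
    HasDerivAt (fun z => exp (β * z) * (c * exp (α * z) + 1) ^ (-(β / α)))
      (β * exp (β * z) * (c * exp (α * z) + 1) ^ (-(1 + β / α))) z := by
  have hpos : 0 < c * exp (α * z) + 1 := by positivity
  have hexp : ∀ γ : ℝ, HasDerivAt (fun z => exp (γ * z)) (exp (γ * z) * γ) z := fun γ => by
    simpa using ((hasDerivAt_id z).const_mul γ).exp
  have hbase := (((hexp α).const_mul c).add_const 1).rpow_const (p := -(β / α))
    (Or.inl hpos.ne')
  refine ((hexp β).mul hbase).congr_deriv ?_
  rw [show -(β / α) - 1 = -(1 + β / α) by ring, rpow_neg_eq_mul_rpow_neg_one_add hpos]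
  field_simp
  ring

lemma tendsto_exp_mul_one_add_exp_rpow_atBot (hα : 0 < α) (hβ : 0 < β) (c : ℝ) :
    Tendsto (fun z => exp (β * z) * (c * exp (α * z) + 1) ^ (-(β / α))) atBot (𝓝 0) := by
  have hexp : ∀ {γ : ℝ}, 0 < γ → Tendsto (fun z => exp (γ * z)) atBot (𝓝 0) := fun hγ =>
    tendsto_exp_atBot.comp ((tendsto_const_mul_atBot_of_pos hγ).2 tendsto_id)
  have hbase : Tendsto (fun z => c * exp (α * z) + 1) atBot (𝓝 1) := by
    simpa using ((hexp hα).const_mul c).add_const 1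
  have hrpow := ((continuousAt_rpow_const 1 (-(β / α)) (Or.inl one_ne_zero)).tendsto.comp hbase)
  simpa using (hexp hβ).mul hrpow

lemma integral_Iic_exp_mul_one_add_exp_rpow (hα : 0 < α) (hβ : 0 < β) (hc : 0 ≤ c) (s : ℝ) :
    ∫ z in Iic s, β * exp (β * z) * (c * exp (α * z) + 1) ^ (-(1 + β / α))
      = exp (β * s) * (c * exp (α * s) + 1) ^ (-(β / α)) := by
  have hint : IntegrableOn
      (fun z => β * exp (β * z) * (c * exp (α * z) + 1) ^ (-(1 + β / α))) (Iic s) := by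
    refine ((integrableOn_exp_mul_Iic hβ s).const_mul β).mono' ?_ (ae_of_all _ fun z => ?_)
    · refine Continuous.aestronglyMeasurable (Continuous.mul (by fun_prop) ?_)
      exact (by fun_prop : Continuous fun z => c * exp (α * z) + 1).rpow_const
        fun z => Or.inl (by positivity)
    · have hle : (c * exp (α * z) + 1) ^ (-(1 + β / α)) ≤ 1 :=
        rpow_le_one_of_one_le_of_nonpos (by nlinarith [exp_pos (α * z)])
          (neg_nonpos.2 (by positivity))
      rw [norm_of_nonneg (by positivity)]
      exact mul_le_of_le_one_right (by positivity) hle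
  rw [integral_Iic_of_hasDerivAt_of_tendsto' (fun z _ => hasDerivAt_exp_mul_one_add_exp_rpow
    hα.ne' hc z) hint (tendsto_exp_mul_one_add_exp_rpow_atBot hα hβ c), sub_zero]

end Antiderivative

section IntegralEquation

variable {α β p : ℝ}

lemma setIntegral_Iic_FStieltjesMeasure (hβ : 0 ≤ β) (hp1 : p ≤ 1) {s : ℝ} (hs : s ≤ 0)
    (f : ℝ → ℝ) :
    ∫ z in Iic s, f z ∂FStieltjesMeasure α β p = ∫ z in Iic s, (1 - p) * β * exp (β * z) * f z := by
  set d : ℝ → ℝ := fun z => if z ≤ 0 then (1 - p) * β * exp (β * z) else p * α * exp (-α * z)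
  have hμ : FStieltjesMeasure α β p = volume.withDensity fun z => (d z).toNNReal := rfl
  have hmeas : Measurable fun z => (d z).toNNReal :=
    (Measurable.ite measurableSet_Iic (by fun_prop) (by fun_prop)).real_toNNReal
  rw [hμ, setIntegral_withDensity_eq_setIntegral_smul hmeas _ measurableSet_Iic]
  refine setIntegral_congr_fun measurableSet_Iic fun z (hz : z ≤ s) => ?_
  have hz0 : z ≤ 0 := hz.trans hs
  have hp : 0 ≤ 1 - p := sub_nonneg.2 hp1
  simp only [d, if_pos hz0, NNReal.smul_def, smul_eq_mul]
  rw [Real.coe_toNNReal _ (by positivity)]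

lemma Gfun_sub_of_le {t z : ℝ} (hzt : z ≤ t) :
    Gfun α β p (t - z) = (p / (1 - p) * exp (-α * t) * exp (α * z) + 1) ^ (-(1 + β / α)) := by
  rw [Gfun, if_neg (by linarith), mul_assoc, ← exp_add]
  ring_nf

lemma Fcdf_of_nonneg {t : ℝ} (ht : 0 ≤ t) : Fcdf α β p t = 1 - p * exp (-α * t) := by
  rcases ht.eq_or_lt with rfl | ht
  · simp [Fcdf]
  · rw [Fcdf, if_neg ht.not_ge]

lemma setIntegral_Iic_Gfun_sub (hα : 0 < α) (hβ : 0 < β) (hp0 : 0 ≤ p) (hp1 : p ≤ 1)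
    {s t : ℝ} (hs : s ≤ 0) (hst : s ≤ t) :
    ∫ z in Iic s, Gfun α β p (t - z) ∂FStieltjesMeasure α β p
      = (1 - p) * (exp (β * s) * (p / (1 - p) * exp (-α * t) * exp (α * s) + 1) ^ (-(β / α))) := by
  have hc : 0 ≤ p / (1 - p) * exp (-α * t) :=
    mul_nonneg (div_nonneg hp0 (sub_nonneg.2 hp1)) (exp_pos _).le
  rw [setIntegral_Iic_FStieltjesMeasure hβ.le hp1 hs,
    ← integral_Iic_exp_mul_one_add_exp_rpow hα hβ hc s, ← integral_const_mul]
  refine setIntegral_congr_fun measurableSet_Iic fun z (hz : z ≤ s) => ?_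
  rw [Gfun_sub_of_le (hz.trans hst)]
  ring

end IntegralEquation

/-- **`G` solves the integral equation for the law of the maximum (Remark on Example 4).**
Let `α > 1`, `β > 0`, `0 < p < 1`.  Then `G` satisfies
`G(t) = ∫_{−∞}^0 G(t−z) dF(z) + (F(t) − F(0)) G(t)` for `t ≥ 0` and
`G(t) = ∫_{−∞}^t G(t−z) dF(z)` for `t < 0`, where `dF` is the Lebesgue–Stieltjes
measure of `F`. -/
theorem G_solves_integral_equation
    (α β p : ℝ) (hα : 1 < α) (hβ : 0 < β) (hp0 : 0 < p) (hp1 : p < 1) :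
    (∀ t : ℝ, 0 ≤ t →
      Gfun α β p t = (∫ z in Set.Iic (0 : ℝ), Gfun α β p (t - z) ∂(FStieltjesMeasure α β p)) +
        (Fcdf α β p t - Fcdf α β p 0) * Gfun α β p t) ∧
    (∀ t : ℝ, t < 0 →
      Gfun α β p t = ∫ z in Set.Iic t, Gfun α β p (t - z) ∂(FStieltjesMeasure α β p)) := by
  have hα0 : 0 < α := one_pos.trans hα
  have hp : 0 < 1 - p := sub_pos.2 hp1
  constructor
  · intro t ht
    have hpos : 0 < p / (1 - p) * exp (-α * t) + 1 := by positivity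
    rw [setIntegral_Iic_Gfun_sub hα0 hβ hp0.le hp1.le le_rfl ht, Fcdf_of_nonneg ht,
      Fcdf_of_nonneg le_rfl, Gfun, if_neg ht.not_gt]
    simp only [mul_zero, exp_zero, mul_one, one_mul]
    rw [rpow_neg_eq_mul_rpow_neg_one_add hpos (β / α)]
    generalize (p / (1 - p) * exp (-α * t) + 1) ^ (-(1 + β / α)) = X
    field_simp
    ring
  · intro t ht
    have hpos : 0 < p / (1 - p) + 1 := by positivity
    rw [setIntegral_Iic_Gfun_sub hα0 hβ hp0.le hp1.le ht.le le_rfl, Gfun, if_pos ht, mul_assoc,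
      ← exp_add, neg_mul, neg_add_cancel, exp_zero, mul_one,
      rpow_neg_eq_mul_rpow_neg_one_add hpos (β / α)]
    generalize (p / (1 - p) + 1) ^ (-(1 + β / α)) = X
    field_simp
    ring
end
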